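/- Let m be a basic probability assignment on a finite nonempty set Θ with k_Bel < 1. Then the intersection probability is the special focus of the pair of lower and upper simplices, with affine coordinate β[Bel] on each of the lines joining corresponding vertices: for every x ∈ Θ and every y ∈ Θ, p[Bel](y) = (1 − β[Bel])·t¹_x(y) + β[Bel]·t^{n−1}_x(y). -/

import Mathlib

open Finset

/-- A basic probability assignment on a finite set `Θ`. -/
def IsBPA {Θ : Type*} [Fintype Θ] (m : Finset Θ → ℝ) : Prop :=
  m ∅ = 0 ∧ (∀ A, 0 ≤ m A) ∧ (∑ A : Finset Θ, m A) = 1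

/-- Belief function `Bel(A) = ∑_{B ⊆ A} m(B)`. -/
noncomputable def Bel {Θ : Type*} [Fintype Θ] [DecidableEq Θ] (m : Finset Θ → ℝ)
    (A : Finset Θ) : ℝ :=
  ∑ B ∈ A.powerset, m B

/-- Plausibility function `Pl(A) = ∑_{B ∩ A ≠ ∅} m(B)`. -/
noncomputable def Pl {Θ : Type*} [Fintype Θ] [DecidableEq Θ] (m : Finset Θ → ℝ)
    (A : Finset Θ) : ℝ :=
  ∑ B ∈ Finset.univ.filter (fun B => B ∩ A ≠ ∅), m B

/-- Total mass of singletons `k_Bel`. -/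
noncomputable def kBel {Θ : Type*} [Fintype Θ] (m : Finset Θ → ℝ) : ℝ :=
  ∑ x : Θ, m {x}

/-- Total plausibility of singletons `k_Pl`. -/
noncomputable def kPl {Θ : Type*} [Fintype Θ] [DecidableEq Θ] (m : Finset Θ → ℝ) : ℝ :=
  ∑ x : Θ, Pl m {x}

/-- `β[Bel] = (1 - k_Bel)/(k_Pl - k_Bel)`. -/
noncomputable def betaBel {Θ : Type*} [Fintype Θ] [DecidableEq Θ] (m : Finset Θ → ℝ) : ℝ :=
  (1 - kBel m) / (kPl m - kBel m)

/-- The intersection probability `p[Bel](x) = m(x) + β[Bel]⬝(Pl(x) - m(x))`. -/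
noncomputable def pInt {Θ : Type*} [Fintype Θ] [DecidableEq Θ] (m : Finset Θ → ℝ)
    (x : Θ) : ℝ :=
  m {x} + betaBel m * (Pl m {x} - m {x})

/-- Vertex `t¹_x` of the lower simplex. -/
noncomputable def lowerVertex {Θ : Type*} [Fintype Θ] [DecidableEq Θ]
    (m : Finset Θ → ℝ) (x : Θ) : Θ → ℝ :=
  fun y => if y = x then m {y} + 1 - kBel m else m {y}

/-- Vertex `t^{n-1}_x` of the upper simplex. -/
noncomputable def upperVertex {Θ : Type*} [Fintype Θ] [DecidableEq Θ]
    (m : Finset Θ → ℝ) (x : Θ) : Θ → ℝ :=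
  fun y => if y = x then Pl m {y} + 1 - kPl m else Pl m {y}

/-! On the line from `t¹_x` to `t^{n-1}_x`, the point with coordinate `β[Bel]` differs from
`p[Bel]` only at `x`, by `(1 - k_Bel) - β[Bel] (k_Pl - k_Bel)`, which vanishes by the definition
of `β[Bel]`. That definition is not a division by zero because
`k_Pl = ∑_B |B| m(B) ≥ ∑_B m(B) = 1 > k_Bel`. -/

section

variable {Θ : Type*} [Fintype Θ] [DecidableEq Θ]

theorem Pl_singleton (m : Finset Θ → ℝ) (x : Θ) : Pl m {x} = ∑ B with x ∈ B, m B := by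
  unfold Pl
  congr 1
  ext B
  simp [← disjoint_iff_inter_eq_empty]

theorem kPl_eq_sum_card_mul (m : Finset Θ → ℝ) : kPl m = ∑ B : Finset Θ, (B.card : ℝ) * m B := by
  simp_rw [kPl, Pl_singleton, sum_filter]
  rw [sum_comm]
  simp [sum_ite_mem]

theorem IsBPA.one_le_kPl {m : Finset Θ → ℝ} (hm : IsBPA m) : 1 ≤ kPl m := by
  obtain ⟨hempty, hnonneg, hsum⟩ := hm
  rw [kPl_eq_sum_card_mul, ← hsum]
  refine sum_le_sum fun B _ => ?_
  rcases B.eq_empty_or_nonempty with rfl | hB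
  · simp [hempty]
  · exact le_mul_of_one_le_left (hnonneg B) (mod_cast hB.card_pos)

theorem betaBel_mul_sub {m : Finset Θ → ℝ} (h : kBel m ≠ kPl m) :
    betaBel m * (kPl m - kBel m) = 1 - kBel m :=
  div_mul_cancel₀ _ (sub_ne_zero.2 h.symm)

theorem pInt_eq_lowerVertex_upperVertex_combination {m : Finset Θ → ℝ} (h : kBel m ≠ kPl m)
    (x y : Θ) :
    pInt m y = (1 - betaBel m) * lowerVertex m x y + betaBel m * upperVertex m x y := by
  have hβ := betaBel_mul_sub h
  unfold pInt lowerVertex upperVertex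
  split_ifs
  · linear_combination hβ
  · ring

end

theorem pInt_special_focus_of_lower_upper_simplices_general
    {Θ : Type*} [Fintype Θ] [DecidableEq Θ]
    (m : Finset Θ → ℝ) (hm : IsBPA m) (h1 : kBel m < 1) :
    ∀ x y : Θ,
      pInt m y = (1 - betaBel m) * lowerVertex m x y + betaBel m * upperVertex m x y :=
  pInt_eq_lowerVertex_upperVertex_combination (h1.trans_le hm.one_le_kPl).ne

/-- Theorem 5: the intersection probability is the special focus of the
pair of lower and upper simplices, with affine coordinate `β[Bel]` on each line joining
corresponding vertices: `p[Bel] = (1 - β[Bel])⬝t¹_x + β[Bel]⬝t^{n-1}_x` for all `x`. -/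
theorem pInt_special_focus_of_lower_upper_simplices
    {Θ : Type*} [Fintype Θ] [DecidableEq Θ] [Nonempty Θ]
    (m : Finset Θ → ℝ) (hm : IsBPA m) (h1 : kBel m < 1) :
    ∀ x y : Θ,
      pInt m y = (1 - betaBel m) * lowerVertex m x y + betaBel m * upperVertex m x y :=
  pInt_special_focus_of_lower_upper_simplices_general m hm h1
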